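/- arXiv:0811.1785 — 4 statements merged into one kernel-verified Lean document; each statement's English description precedes it below -/
import Mathlib

section
/- Consider a two-polygon configuration with n ≥ 2 and Γ₁ + Γ₂ = 0, i.e., r = Γ₂/Γ₁ = −1. Then the only solution x > 0 of equation (1) is x = 1 (which does not give an admissible configuration), and equation (2) has exactly two solutions x > 0. Consequently, for zero total vorticity there is no relative equilibrium with argument of s₂/s₁ equal to 2Kπ/n, and there are exactly two relative equilibria with argument 2(K+1/2)π/n. -/
open Finset

/-- Equation (1) for two concentric regular `n`-gons:
`(x² − (r + λ))(xⁿ − (λr + 1)) = λ(r² + λr + 1)`, with `λ = 2n/(n−1)` and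
`r = Γ₂/Γ₁`; its solutions `x > 0` (with `x ≠ 1` if `r = −1`) correspond
bijectively to the relative equilibria with argument of `s₂/s₁` equal to `2Kπ/n`. -/
def EqOne (n : ℕ) (lam r x : ℝ) : Prop :=
  (x ^ 2 - (r + lam)) * (x ^ n - (lam * r + 1)) = lam * (r ^ 2 + lam * r + 1)

/-- Equation (2): `(x² − (r + λ))(xⁿ + (λr + 1)) = −λ(r² + λr + 1)`; its solutions
`x > 0` correspond bijectively to the relative equilibria with argument of `s₂/s₁`
equal to `2(K+1/2)π/n`. -/
def EqTwo (n : ℕ) (lam r x : ℝ) : Prop :=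
  (x ^ 2 - (r + lam)) * (x ^ n + (lam * r + 1)) = -(lam * (r ^ 2 + lam * r + 1))

private lemma pair_aux {x : ℝ} (hx : 0 < x) (p q : ℕ) :
    x ^ (p + 1) + x ^ (q + 1) ≤ x + x ^ (p + q + 1) := by
  have key : 0 ≤ x * ((1 - x ^ p) * (1 - x ^ q)) := by
    rcases le_total x 1 with h | h
    · have hp : x ^ p ≤ 1 := pow_le_one₀ hx.le h
      have hq : x ^ q ≤ 1 := pow_le_one₀ hx.le h
      exact mul_nonneg hx.le (mul_nonneg (by linarith) (by linarith))
    · have hp : 1 ≤ x ^ p := one_le_pow₀ h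
      have hq : 1 ≤ x ^ q := one_le_pow₀ h
      have h2 : 0 ≤ (x ^ p - 1) * (x ^ q - 1) := mul_nonneg (by linarith) (by linarith)
      nlinarith [h2]
  have e : x * ((1 - x ^ p) * (1 - x ^ q))
      = x + x ^ (p + q + 1) - x ^ (p + 1) - x ^ (q + 1) := by ring
  linarith [key, e.symm ▸ key]

private lemma Qpos (m : ℕ) {x : ℝ} (hx : 0 < x) :
    0 < ((m : ℝ) + 1) * (∑ i ∈ range (m + 4), x ^ i)
        - ((m : ℝ) + 3) * (x ^ 2 * ∑ i ∈ range m, x ^ i) := by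
  have hT : x ^ 2 * ∑ i ∈ range m, x ^ i = ∑ i ∈ range m, x ^ (i + 2) := by
    rw [Finset.mul_sum]
    exact Finset.sum_congr rfl fun i _ => by ring
  have hsplit : ∑ i ∈ range (m + 4), x ^ i
      = (∑ i ∈ range m, x ^ (i + 2)) + (1 + x + x ^ (m + 2) + x ^ (m + 3)) := by
    rw [Finset.sum_range_succ, Finset.sum_range_succ, Finset.sum_range_succ',
      Finset.sum_range_succ']
    have : ∀ i, x ^ (i + 1 + 1) = x ^ (i + 2) := fun i => by norm_num
    simp only [this, pow_zero, pow_one]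
    ring
  have hrefl : ∑ i ∈ range m, x ^ (m + 1 - i) = ∑ i ∈ range m, x ^ (i + 2) := by
    rw [← Finset.sum_range_reflect]
    refine Finset.sum_congr rfl fun i hi => ?_
    rw [Finset.mem_range] at hi
    congr 1
    omega
  have hpair : ∀ i ∈ range m, x ^ (i + 2) + x ^ (m + 1 - i) ≤ x + x ^ (m + 2) := by
    intro i hi
    rw [Finset.mem_range] at hi
    have h := pair_aux hx (i + 1) (m - i)
    have e1 : m - i + 1 = m + 1 - i := by omega
    have e2 : i + 1 + (m - i) + 1 = m + 2 := by omega
    have e3 : i + 1 + 1 = i + 2 := by omega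
    rwa [e1, e2, e3] at h
  have hsum2 : (∑ i ∈ range m, x ^ (i + 2)) + (∑ i ∈ range m, x ^ (i + 2))
      ≤ (m : ℝ) * (x + x ^ (m + 2)) := by
    calc (∑ i ∈ range m, x ^ (i + 2)) + (∑ i ∈ range m, x ^ (i + 2))
        = ∑ i ∈ range m, (x ^ (i + 2) + x ^ (m + 1 - i)) := by
          rw [Finset.sum_add_distrib, hrefl]
      _ ≤ ∑ _i ∈ range m, (x + x ^ (m + 2)) := Finset.sum_le_sum hpair
      _ = (m : ℝ) * (x + x ^ (m + 2)) := by
          rw [Finset.sum_const, Finset.card_range, nsmul_eq_mul]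
  rw [hT, hsplit]
  have hx2 : 0 < x ^ (m + 2) := pow_pos hx _
  have hx3 : 0 < x ^ (m + 3) := pow_pos hx _
  have hm0 : (0 : ℝ) ≤ (m : ℝ) := Nat.cast_nonneg m
  nlinarith [hsum2, mul_nonneg hm0 hx3.le, mul_nonneg hm0 hx.le, mul_nonneg hm0 hx2.le]

private lemma one_root (m : ℕ) {a : ℝ} (hma : ((m : ℝ) + 1) * a = (m : ℝ) + 3) :
    {x : ℝ | 0 < x ∧ (x ^ 2 - a) * (x ^ (m + 2) + a) = 1 - a ^ 2} = {1} := by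
  ext x
  simp only [Set.mem_setOf_eq, Set.mem_singleton_iff]
  constructor
  · rintro ⟨hx, heq⟩
    have hQ := Qpos m hx
    have g1 := geom_sum_mul x (m + 4)
    have g2 := geom_sum_mul x m
    have expand : (x - 1) * (((m : ℝ) + 1) * (∑ i ∈ range (m + 4), x ^ i)
          - ((m : ℝ) + 3) * (x ^ 2 * ∑ i ∈ range m, x ^ i))
        = ((m : ℝ) + 1) * ((∑ i ∈ range (m + 4), x ^ i) * (x - 1))
          - ((m : ℝ) + 3) * x ^ 2 * ((∑ i ∈ range m, x ^ i) * (x - 1)) := by ring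
    rw [g1, g2] at expand
    have key : (x - 1) * (((m : ℝ) + 1) * (∑ i ∈ range (m + 4), x ^ i)
          - ((m : ℝ) + 3) * (x ^ 2 * ∑ i ∈ range m, x ^ i)) = 0 := by
      rw [expand]
      linear_combination ((m : ℝ) + 1) * heq + (x ^ (m + 2) - x ^ 2) * hma
    rcases mul_eq_zero.1 key with h | h
    · linarith
    · exact absurd h (ne_of_gt hQ)
  · rintro rfl
    exact ⟨one_pos, by ring⟩

set_option maxHeartbeats 1000000 in
private lemma two_roots (m : ℕ) {a : ℝ} (ha : 1 < a) :
    {x : ℝ | 0 < x ∧ (x ^ 2 - a) * (x ^ (m + 2) - a) = a ^ 2 - 1}.encard = 2 := by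
  have ha0 : 0 < a := by linarith
  have hn0 : m + 2 ≠ 0 := by omega
  have hcont : Continuous fun x : ℝ => (x ^ 2 - a) * (x ^ (m + 2) - a) :=
    ((continuous_pow 2).sub continuous_const).mul
      ((continuous_pow (m + 2)).sub continuous_const)
  set c : ℝ := a ^ ((m + 2 : ℕ) : ℝ)⁻¹ with hc_def
  have hc0 : 0 < c := Real.rpow_pos_of_pos ha0 _
  have hcn : c ^ (m + 2) = a := Real.rpow_inv_natCast_pow ha0.le hn0
  have hc1 : 1 < c := by
    by_contra h
    push_neg at h
    have h2 : c ^ (m + 2) ≤ 1 := pow_le_one₀ hc0.le h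
    rw [hcn] at h2; linarith
  set s : ℝ := Real.sqrt a with hs_def
  have hs2 : s ^ 2 = a := Real.sq_sqrt ha0.le
  have hs0 : 0 < s := Real.sqrt_pos.2 ha0
  have hs1 : 1 < s := by nlinarith
  have hcs : c ≤ s := by
    have h1 : c ^ ((m + 2) * 2) = a ^ 2 := by rw [pow_mul, hcn]
    have h2 : s ^ ((m + 2) * 2) = a ^ (m + 2) := by rw [mul_comm, pow_mul, hs2]
    have h3 : a ^ 2 ≤ a ^ (m + 2) := pow_le_pow_right₀ ha.le (by omega)
    have h4 : c ^ ((m + 2) * 2) ≤ s ^ ((m + 2) * 2) := by rw [h1, h2]; exact h3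
    exact le_of_pow_le_pow_left₀ (n := (m + 2) * 2) (by omega) hs0.le h4
  have g0 : ((0 : ℝ) ^ 2 - a) * ((0 : ℝ) ^ (m + 2) - a) = a ^ 2 := by
    rw [zero_pow hn0, zero_pow (two_ne_zero)]; ring
  have gc : (c ^ 2 - a) * (c ^ (m + 2) - a) = 0 := by rw [hcn]; ring
  have gs : (s ^ 2 - a) * (s ^ (m + 2) - a) = 0 := by rw [hs2]; ring
  -- left root
  have hmem1 : a ^ 2 - 1 ∈ Set.Icc ((c ^ 2 - a) * (c ^ (m + 2) - a))
      (((0 : ℝ) ^ 2 - a) * ((0 : ℝ) ^ (m + 2) - a)) := by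
    rw [Set.mem_Icc, gc, g0]
    constructor <;> nlinarith
  obtain ⟨x₁, hx₁I, hgx₁⟩ := intermediate_value_Icc' hc0.le hcont.continuousOn hmem1
  have hgx₁' : (x₁ ^ 2 - a) * (x₁ ^ (m + 2) - a) = a ^ 2 - 1 := hgx₁
  have hx₁0 : 0 < x₁ := by
    rcases eq_or_lt_of_le hx₁I.1 with h | h
    · exfalso; rw [← h] at hgx₁'; rw [g0] at hgx₁'; linarith
    · exact h
  have hx₁c : x₁ < c := by
    rcases eq_or_lt_of_le hx₁I.2 with h | h
    · exfalso; rw [h, gc] at hgx₁'; nlinarith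
    · exact h
  -- right root
  have hb1 : (1 : ℝ) ≤ s + a := by linarith
  have hbp : (s + a) ^ 2 ≤ (s + a) ^ (m + 2) := pow_le_pow_right₀ hb1 (by omega)
  have hu : a ^ 2 + 2 * a ≤ (s + a) ^ 2 - a := by
    nlinarith [mul_pos (sub_pos.2 hs1) ha0]
  have hv : a ^ 2 + 2 * a ≤ (s + a) ^ (m + 2) - a := by linarith
  have hgb : a ^ 2 - 1 ≤ ((s + a) ^ 2 - a) * ((s + a) ^ (m + 2) - a) := by
    have h4 : (a ^ 2 + 2 * a) * (a ^ 2 + 2 * a)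
        ≤ ((s + a) ^ 2 - a) * ((s + a) ^ (m + 2) - a) :=
      mul_le_mul hu hv (by nlinarith) (by nlinarith)
    nlinarith
  have hmem2 : a ^ 2 - 1 ∈ Set.Icc ((s ^ 2 - a) * (s ^ (m + 2) - a))
      (((s + a) ^ 2 - a) * ((s + a) ^ (m + 2) - a)) := by
    rw [Set.mem_Icc, gs]
    exact ⟨by nlinarith, hgb⟩
  obtain ⟨x₂, hx₂I, hgx₂⟩ :=
    intermediate_value_Icc (by linarith : s ≤ s + a) hcont.continuousOn hmem2
  have hgx₂' : (x₂ ^ 2 - a) * (x₂ ^ (m + 2) - a) = a ^ 2 - 1 := hgx₂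
  have hx₂s : s < x₂ := by
    rcases eq_or_lt_of_le hx₂I.1 with h | h
    · exfalso; rw [← h, gs] at hgx₂'; nlinarith
    · exact h
  -- strict antitonicity on (0, c]
  have anti : ∀ p q : ℝ, 0 < p → p < q → q ≤ c →
      (q ^ 2 - a) * (q ^ (m + 2) - a) < (p ^ 2 - a) * (p ^ (m + 2) - a) := by
    intro p q hp hpq hqc
    have hq0 : 0 < q := hp.trans hpq
    have hq2 : q ^ 2 ≤ a := by
      have h1 : q ^ 2 ≤ s ^ 2 := pow_le_pow_left₀ hq0.le (hqc.trans hcs) 2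
      linarith [hs2]
    have hqn : q ^ (m + 2) ≤ a := by
      calc q ^ (m + 2) ≤ c ^ (m + 2) := pow_le_pow_left₀ hq0.le hqc _
        _ = a := hcn
    have hp2 : p ^ 2 < q ^ 2 := by nlinarith
    have hpn : p ^ (m + 2) < q ^ (m + 2) := pow_lt_pow_left₀ hpq hp.le hn0
    nlinarith [mul_nonneg (sub_nonneg.2 hq2) (sub_pos.2 hpn).le,
      mul_pos (sub_pos.2 (lt_of_lt_of_le hpn hqn)) (sub_pos.2 hp2)]
  -- strict monotonicity on [s, ∞)
  have mono : ∀ p q : ℝ, s ≤ p → p < q →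
      (p ^ 2 - a) * (p ^ (m + 2) - a) < (q ^ 2 - a) * (q ^ (m + 2) - a) := by
    intro p q hsp hpq
    have hp1 : (1 : ℝ) ≤ p := hs1.le.trans hsp
    have hp0 : 0 < p := by linarith
    have hp2 : a ≤ p ^ 2 := by nlinarith [pow_le_pow_left₀ hs0.le hsp 2]
    have hpn : a ≤ p ^ (m + 2) := by
      have h1 : p ^ 2 ≤ p ^ (m + 2) := pow_le_pow_right₀ hp1 (by omega)
      linarith
    have hq2 : p ^ 2 < q ^ 2 := by nlinarith
    have hqn : p ^ (m + 2) < q ^ (m + 2) := pow_lt_pow_left₀ hpq hp0.le hn0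
    nlinarith [mul_nonneg (sub_nonneg.2 hp2) (sub_pos.2 hqn).le,
      mul_pos (sub_pos.2 (lt_of_le_of_lt hpn hqn)) (sub_pos.2 hq2)]
  have hset : {x : ℝ | 0 < x ∧ (x ^ 2 - a) * (x ^ (m + 2) - a) = a ^ 2 - 1} = {x₁, x₂} := by
    ext x
    simp only [Set.mem_setOf_eq, Set.mem_insert_iff, Set.mem_singleton_iff]
    constructor
    · rintro ⟨hx0, hx⟩
      by_cases hxc : x ≤ c
      · left
        rcases lt_trichotomy x x₁ with h | h | h
        · exfalso
          have h2 := anti x x₁ hx0 h hx₁c.le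
          rw [hx, hgx₁'] at h2
          exact lt_irrefl _ h2
        · exact h
        · exfalso
          have h2 := anti x₁ x hx₁0 h hxc
          rw [hx, hgx₁'] at h2
          exact lt_irrefl _ h2
      · push_neg at hxc
        by_cases hxs : s ≤ x
        · right
          rcases lt_trichotomy x x₂ with h | h | h
          · exfalso
            have h2 := mono x x₂ hxs h
            rw [hx, hgx₂'] at h2
            exact lt_irrefl _ h2
          · exact h
          · exfalso
            have h2 := mono x₂ x hx₂s.le h
            rw [hx, hgx₂'] at h2
            exact lt_irrefl _ h2
        · push_neg at hxs
          exfalso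
          have h1 : a ≤ x ^ (m + 2) := by
            calc a = c ^ (m + 2) := hcn.symm
              _ ≤ x ^ (m + 2) := pow_le_pow_left₀ hc0.le hxc.le _
          have h2 : x ^ 2 ≤ a := by
            nlinarith [pow_le_pow_left₀ hx0.le hxs.le 2]
          nlinarith [mul_nonneg (by linarith : (0 : ℝ) ≤ a - x ^ 2)
            (by linarith : (0 : ℝ) ≤ x ^ (m + 2) - a)]
    · rintro (rfl | rfl)
      · exact ⟨hx₁0, hgx₁'⟩
      · exact ⟨hs0.trans hx₂s, hgx₂'⟩
  rw [hset]
  refine Set.encard_pair ?_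
  intro h
  rw [h] at hx₁c
  linarith

/-- **Counting two-polygon relative equilibria with zero total vorticity
(`Γ₁ + Γ₂ = 0`, i.e. `r = Γ₂/Γ₁ = −1`).** The only solution `x > 0` of equation (1)
is `x = 1`, which is not admissible, so there is no relative equilibrium with
argument of `s₂/s₁` equal to `2Kπ/n`; and equation (2) has exactly two solutions
`x > 0`, giving exactly two relative equilibria with argument `2(K+1/2)π/n`. -/
theorem two_polygon_count_zero_total_vorticity
    (n : ℕ) (hn : 2 ≤ n)
    (Γ₁ Γ₂ : ℝ) (hΓ₁ : Γ₁ ≠ 0) (hΓ₂ : Γ₂ ≠ 0) (hsum : Γ₁ + Γ₂ = 0)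
    (r : ℝ) (hr : r = Γ₂ / Γ₁)
    (lam : ℝ) (hlam : lam = 2 * n / ((n : ℝ) - 1)) :
    {x : ℝ | 0 < x ∧ EqOne n lam r x} = {1}
    ∧ {x : ℝ | 0 < x ∧ EqTwo n lam r x}.encard = 2 := by
  obtain ⟨m, rfl⟩ : ∃ m, n = m + 2 := ⟨n - 2, by omega⟩
  have hΓ : Γ₂ = -Γ₁ := by linarith
  have hr' : r = -1 := by rw [hr, hΓ, neg_div, div_self hΓ₁]
  have hm1 : ((m : ℝ) + 1) ≠ 0 := by positivity
  have hma : ((m : ℝ) + 1) * (lam - 1) = (m : ℝ) + 3 := by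
    have hlam2 : lam * ((m : ℝ) + 1) = 2 * ((m : ℝ) + 2) := by
      rw [hlam]
      push_cast
      rw [show ((m : ℝ) + 2 - 1) = (m : ℝ) + 1 by ring, div_mul_cancel₀ _ hm1]
    linear_combination hlam2
  have ha : 1 < lam - 1 := by
    have h1 : lam - 1 = ((m : ℝ) + 3) / ((m : ℝ) + 1) := by
      rw [eq_div_iff hm1]
      linear_combination hma
    rw [h1, lt_div_iff₀ (by positivity)]
    linarith
  constructor
  · have hseteq : {x : ℝ | 0 < x ∧ EqOne (m + 2) lam r x}
        = {x : ℝ | 0 < x ∧ (x ^ 2 - (lam - 1)) * (x ^ (m + 2) + (lam - 1))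
            = 1 - (lam - 1) ^ 2} := by
      ext x
      simp only [Set.mem_setOf_eq, EqOne, hr']
      constructor
      · rintro ⟨h0, h⟩; exact ⟨h0, by linear_combination h⟩
      · rintro ⟨h0, h⟩; exact ⟨h0, by linear_combination h⟩
    rw [hseteq, one_root m hma]
  · have hseteq : {x : ℝ | 0 < x ∧ EqTwo (m + 2) lam r x}
        = {x : ℝ | 0 < x ∧ (x ^ 2 - (lam - 1)) * (x ^ (m + 2) - (lam - 1))
            = (lam - 1) ^ 2 - 1} := by
      ext x
      simp only [Set.mem_setOf_eq, EqTwo, hr']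
      constructor
      · rintro ⟨h0, h⟩; exact ⟨h0, by linear_combination h⟩
      · rintro ⟨h0, h⟩; exact ⟨h0, by linear_combination h⟩
    rw [hseteq]
    exact two_roots m ha
end

section
/- Consider a two-polygon configuration with n ≥ 2. The configuration is an absolute equilibrium (v_{k,d} = 0 for every vortex) if and only if (s₂/s₁)ⁿ = 1 + (2n/(n−1))·(Γ₂/Γ₁) and (s₂/s₁)ⁿ = −(Γ₂/Γ₁)². In that case Γ₂/Γ₁ = −μ_n or Γ₂/Γ₁ = −1/μ_n, where μ_n = n/(n−1) + √((n/(n−1))² − 1); in particular Γ₂/Γ₁ < 0 and (s₂/s₁)ⁿ is a negative real number, so the argument of s₂/s₁ is 2(K+1/2)π/n for some integer K. -/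
open Finset

lemma pow_val_mod' {ζ : ℂ} {n : ℕ} (h : ζ ^ n = 1) (m : ℕ) : ζ ^ (m % n) = ζ ^ m := by
  conv_rhs => rw [← Nat.div_add_mod m n]
  rw [pow_add, pow_mul, h, one_pow, one_mul]

lemma sum_one_sub_zeta (n : ℕ) (hn : 1 ≤ n) (ζ : ℂ) (hζ : IsPrimitiveRoot ζ n) :
    ∑ m ∈ Finset.Ico 1 n, (1 - ζ ^ m)⁻¹ = ((n : ℂ) - 1) / 2 := by
  have hζ0 : ζ ≠ 0 := by
    intro h; have := hζ.pow_eq_one; rw [h, zero_pow (by omega)] at this; simp at this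
  have key : ∀ x : ℂ, x ≠ 0 → x ≠ 1 → (1 - x)⁻¹ + (1 - x⁻¹)⁻¹ = 1 := by
    intro x hx0 hx1
    have h1 : (1 : ℂ) - x ≠ 0 := sub_ne_zero.mpr (Ne.symm hx1)
    have h2 : x - 1 ≠ 0 := sub_ne_zero.mpr hx1
    have h3 : (1 : ℂ) - x⁻¹ = (x - 1) / x := by field_simp
    rw [h3]
    field_simp
    ring
  have hrev : ∑ m ∈ Finset.Ico 1 n, (1 - ζ ^ (n - m))⁻¹
      = ∑ m ∈ Finset.Ico 1 n, (1 - ζ ^ m)⁻¹ := by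
    refine Finset.sum_nbij' (fun m => n - m) (fun m => n - m) ?_ ?_ ?_ ?_ ?_ <;>
      simp only [Finset.mem_Ico] <;> intro a ha
    · omega
    · omega
    · omega
    · omega
    · trivial
  have hpair : ∀ m ∈ Finset.Ico 1 n, (1 - ζ ^ m)⁻¹ + (1 - ζ ^ (n - m))⁻¹ = 1 := by
    intro m hm
    simp only [Finset.mem_Ico] at hm
    have h1 : ζ ^ m ≠ 1 := hζ.pow_ne_one_of_pos_of_lt (by omega) hm.2
    have h2 : ζ ^ (n - m) * ζ ^ m = 1 := by
      rw [← pow_add, Nat.sub_add_cancel (le_of_lt hm.2), hζ.pow_eq_one]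
    have h3 : ζ ^ (n - m) = (ζ ^ m)⁻¹ := eq_inv_of_mul_eq_one_left h2
    rw [h3]
    exact key _ (pow_ne_zero m hζ0) h1
  have hsum : ∑ m ∈ Finset.Ico 1 n, ((1 - ζ ^ m)⁻¹ + (1 - ζ ^ (n - m))⁻¹)
      = (n : ℂ) - 1 := by
    rw [Finset.sum_congr rfl hpair, Finset.sum_const, Nat.card_Ico]
    simp [nsmul_eq_mul, Nat.cast_sub hn]
  rw [Finset.sum_add_distrib, hrev, ← two_mul] at hsum
  rw [eq_div_iff (two_ne_zero' ℂ)]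
  linear_combination hsum

lemma sum_inv_sub_zeta (n : ℕ) (hn : 1 ≤ n) (ζ : ℂ) (hζ : IsPrimitiveRoot ζ n)
    (a : ℂ) (ha : a ^ n ≠ 1) :
    ∑ j ∈ Finset.range n, (a - ζ ^ j)⁻¹ = n * a ^ (n - 1) / (a ^ n - 1) := by
  have hA : a ^ n - 1 ≠ 0 := sub_ne_zero.mpr ha
  have hden : ∀ j ∈ Finset.range n, a - ζ ^ j ≠ 0 := by
    intro j _ h
    apply ha
    rw [sub_eq_zero] at h
    rw [h, ← pow_mul, mul_comm, pow_mul, hζ.pow_eq_one, one_pow]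
  have hterm : ∀ j ∈ Finset.range n,
      (a - ζ ^ j)⁻¹ = (∑ i ∈ Finset.range n, a ^ i * (ζ ^ j) ^ (n - 1 - i)) / (a ^ n - 1) := by
    intro j hj
    have hg := geom_sum₂_mul a (ζ ^ j) n
    rw [← pow_mul, mul_comm j n, pow_mul, hζ.pow_eq_one, one_pow] at hg
    rw [eq_div_iff hA, ← hg, mul_comm, mul_assoc, mul_inv_cancel₀ (hden j hj), mul_one]
  rw [Finset.sum_congr rfl hterm, ← Finset.sum_div]
  congr 1
  rw [Finset.sum_comm]
  have hinner : ∀ i ∈ Finset.range n,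
      ∑ j ∈ Finset.range n, a ^ i * (ζ ^ j) ^ (n - 1 - i)
        = if i = n - 1 then (n : ℂ) * a ^ (n - 1) else 0 := by
    intro i hi
    simp only [Finset.mem_range] at hi
    by_cases h : i = n - 1
    · subst h
      simp [Nat.sub_self, Finset.sum_const, mul_comm]
    · have h1 : 0 < n - 1 - i := by omega
      have h2 : n - 1 - i < n := by omega
      have hx1 : ζ ^ (n - 1 - i) ≠ 1 := hζ.pow_ne_one_of_pos_of_lt h1.ne' h2
      have hxn : (ζ ^ (n - 1 - i)) ^ n = 1 := by
        rw [pow_right_comm, hζ.pow_eq_one, one_pow]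
      have hg := geom_sum_mul (ζ ^ (n - 1 - i)) n
      rw [hxn, sub_self] at hg
      have hz : ∑ j ∈ Finset.range n, (ζ ^ (n - 1 - i)) ^ j = 0 := by
        rcases mul_eq_zero.mp hg with h' | h'
        · exact h'
        · exact absurd (sub_eq_zero.mp h') hx1
      simp only [if_neg h]
      calc ∑ j ∈ Finset.range n, a ^ i * (ζ ^ j) ^ (n - 1 - i)
          = a ^ i * ∑ j ∈ Finset.range n, (ζ ^ (n - 1 - i)) ^ j := by
            rw [Finset.mul_sum]
            exact Finset.sum_congr rfl fun j _ => by rw [pow_right_comm]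
        _ = 0 := by rw [hz, mul_zero]
  rw [Finset.sum_congr rfl hinner, Finset.sum_ite_eq' (Finset.range n) (n - 1)]
  simp [Finset.mem_range, Nat.sub_lt (by omega : 0 < n)]

/-- **Absolute equilibria of two concentric regular `n`-gons (Theorem abs_eq).**
The configuration is an absolute equilibrium (all vortex velocities vanish) iff
`(s₂/s₁)ⁿ = 1 + (2n/(n−1))(Γ₂/Γ₁)` and `(s₂/s₁)ⁿ = −(Γ₂/Γ₁)²`. In that case
`Γ₂/Γ₁ = −μₙ` or `−1/μₙ` with `μₙ = n/(n−1) + √((n/(n−1))² − 1)`; in particular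
`Γ₂/Γ₁ < 0` and `(s₂/s₁)ⁿ` is a negative real number, so the argument of `s₂/s₁`
is `2(K+1/2)π/n`. -/
theorem two_polygon_absolute_equilibrium
    (n : ℕ) (hn : 2 ≤ n)
    (ρ : ℂ) (hρ : ρ = Complex.exp (2 * Real.pi * Complex.I / n))
    (s : Fin 2 → ℂ) (hs : ∀ d, s d ≠ 0)
    (hsep : (s 1 / s 0) ^ n ≠ 1)
    (Γ : Fin 2 → ℝ) (hΓ : ∀ d, Γ d ≠ 0)
    (z : Fin n × Fin 2 → ℂ) (hz : ∀ q, z q = s q.2 * ρ ^ (q.1 : ℕ))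
    (v : Fin n × Fin 2 → ℂ)
    (hv : ∀ q, v q = Complex.I *
      ∑ q' ∈ univ \ {q}, (Γ q'.2 : ℂ) / (starRingEnd ℂ (z q) - starRingEnd ℂ (z q')))
    (r : ℝ) (hr : r = Γ 1 / Γ 0)
    (lam : ℝ) (hlam : lam = 2 * n / ((n : ℝ) - 1))
    (μ : ℝ) (hμ : μ = (n : ℝ) / ((n : ℝ) - 1) +
      Real.sqrt (((n : ℝ) / ((n : ℝ) - 1)) ^ 2 - 1)) :
    ((∀ q, v q = 0) ↔
      ((s 1 / s 0) ^ n = 1 + (lam : ℂ) * (r : ℂ) ∧ (s 1 / s 0) ^ n = -((r : ℂ) ^ 2)))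
    ∧ ((∀ q, v q = 0) →
        (r = -μ ∨ r = -1 / μ) ∧ r < 0 ∧ ∃ c : ℝ, c < 0 ∧ (s 1 / s 0) ^ n = (c : ℂ)) := by
  haveI : NeZero n := ⟨by omega⟩
  have hn0 : n ≠ 0 := by omega
  have hn1 : 1 ≤ n := by omega
  have hρprim : IsPrimitiveRoot ρ n := hρ ▸ Complex.isPrimitiveRoot_exp n hn0
  set C := starRingEnd ℂ with hC
  have hζprim : IsPrimitiveRoot (C ρ) n :=
    hρprim.map_of_injective (starRingEnd ℂ).injective
  set ζ : ℂ := C ρ with hζdef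
  have hζ1 : ζ ^ n = 1 := hζprim.pow_eq_one
  have hζ0 : ζ ≠ 0 := by
    intro h; rw [h, zero_pow hn0] at hζ1; exact zero_ne_one hζ1
  set σ : Fin 2 → ℂ := fun d => C (s d) with hσdef
  have hσ0 : ∀ d, σ d ≠ 0 := by
    intro d h
    exact hs d (by simpa [hσdef, map_eq_zero] using h)
  set U : ℂ := (σ 1 / σ 0) ^ n with hUdef
  have hUconj : U = C ((s 1 / s 0) ^ n) := by
    rw [hUdef, map_pow, map_div₀]
  have hU1 : U ≠ 1 := by
    rw [hUconj]
    intro h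
    apply hsep
    have := congrArg C h
    rwa [Complex.conj_conj, map_one] at this
  have hU0 : U ≠ 0 := pow_ne_zero _ (div_ne_zero (hσ0 1) (hσ0 0))
  have hzconj : ∀ q : Fin n × Fin 2, C (z q) = σ q.2 * ζ ^ (q.1 : ℕ) := by
    intro q; rw [hz, map_mul, map_pow]
  have hadd : ∀ a b : Fin n, ζ ^ ((a + b : Fin n) : ℕ) = ζ ^ (a : ℕ) * ζ ^ (b : ℕ) := by
    intro a b; rw [Fin.val_add, pow_val_mod' hζ1, pow_add]
  have hXne : ∀ (d : Fin 2) (k : Fin n), σ d * ζ ^ (k : ℕ) ≠ 0 :=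
    fun d k => mul_ne_zero (hσ0 d) (pow_ne_zero _ hζ0)
  -- sum over the same polygon
  have sumA : ∀ (k : Fin n) (d : Fin 2),
      ∑ j : Fin n, (σ d * ζ ^ (k : ℕ) - σ d * ζ ^ (j : ℕ))⁻¹
        = ((n : ℂ) - 1) / 2 * (σ d * ζ ^ (k : ℕ))⁻¹ := by
    intro k d
    have hfact : ∀ j : Fin n, σ d * ζ ^ (k : ℕ) - σ d * ζ ^ (j : ℕ)
        = (σ d * ζ ^ (k : ℕ)) * (1 - ζ ^ (((j - k : Fin n)) : ℕ)) := by
      intro j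
      have h1 : ζ ^ (((j - k : Fin n) + k : Fin n) : ℕ)
          = ζ ^ ((j - k : Fin n) : ℕ) * ζ ^ (k : ℕ) := hadd _ _
      rw [sub_add_cancel] at h1
      rw [h1]; ring
    calc ∑ j : Fin n, (σ d * ζ ^ (k : ℕ) - σ d * ζ ^ (j : ℕ))⁻¹
        = ∑ j : Fin n, (σ d * ζ ^ (k : ℕ))⁻¹ * (1 - ζ ^ (((j - k : Fin n)) : ℕ))⁻¹ := by
          exact Finset.sum_congr rfl fun j _ => by rw [hfact j, mul_inv]
      _ = (σ d * ζ ^ (k : ℕ))⁻¹ * ∑ j : Fin n, (1 - ζ ^ (((j - k : Fin n)) : ℕ))⁻¹ := by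
          rw [← Finset.mul_sum]
      _ = (σ d * ζ ^ (k : ℕ))⁻¹ * ∑ m : Fin n, (1 - ζ ^ ((m : Fin n) : ℕ))⁻¹ := by
          congr 1
          exact Fintype.sum_equiv (Equiv.subRight k)
            (fun j => (1 - ζ ^ (((j - k : Fin n)) : ℕ))⁻¹)
            (fun m => (1 - ζ ^ ((m : Fin n) : ℕ))⁻¹) (fun x => rfl)
      _ = ((n : ℂ) - 1) / 2 * (σ d * ζ ^ (k : ℕ))⁻¹ := by
          rw [Fin.sum_univ_eq_sum_range (fun i => (1 - ζ ^ i)⁻¹) n]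
          have hsplit : Finset.range n = insert 0 (Finset.Ico 1 n) := by
            ext i; simp only [Finset.mem_range, Finset.mem_insert, Finset.mem_Ico]; omega
          rw [hsplit, Finset.sum_insert (by simp), pow_zero, sub_self, inv_zero, zero_add,
            sum_one_sub_zeta n hn1 ζ hζprim, mul_comm]
  -- sum over the other polygon
  have sumB : ∀ (k : Fin n) (d e : Fin 2), (σ d / σ e) ^ n ≠ 1 →
      ∑ j : Fin n, (σ d * ζ ^ (k : ℕ) - σ e * ζ ^ (j : ℕ))⁻¹
        = (n : ℂ) * ((σ d / σ e) ^ n) / ((σ d / σ e) ^ n - 1) * (σ d * ζ ^ (k : ℕ))⁻¹ := by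
    intro k d e hu
    obtain ⟨a, hadef⟩ : ∃ a : ℂ, a = σ d * ζ ^ (k : ℕ) / σ e := ⟨_, rfl⟩
    have han : a ^ n = (σ d / σ e) ^ n := by
      rw [hadef, div_pow, mul_pow, pow_right_comm, hζ1, one_pow, mul_one, ← div_pow]
    have ha0 : a ≠ 0 := by rw [hadef]; exact div_ne_zero (hXne d k) (hσ0 e)
    have haU : a ^ n ≠ 1 := by rw [han]; exact hu
    have hA : a ^ n - 1 ≠ 0 := sub_ne_zero.mpr haU
    have hfact : ∀ j : Fin n, σ d * ζ ^ (k : ℕ) - σ e * ζ ^ (j : ℕ)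
        = σ e * (a - ζ ^ (j : ℕ)) := by
      intro j; rw [hadef, mul_sub, mul_div_cancel₀ _ (hσ0 e)]
    have hpow : a ^ (n - 1) * a = a ^ n := by
      rw [← pow_succ]; congr 1; omega
    calc ∑ j : Fin n, (σ d * ζ ^ (k : ℕ) - σ e * ζ ^ (j : ℕ))⁻¹
        = ∑ j : Fin n, (σ e)⁻¹ * (a - ζ ^ (j : ℕ))⁻¹ := by
          exact Finset.sum_congr rfl fun j _ => by rw [hfact j, mul_inv]
      _ = (σ e)⁻¹ * ∑ j : Fin n, (a - ζ ^ (j : ℕ))⁻¹ := by rw [← Finset.mul_sum]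
      _ = (σ e)⁻¹ * ((n : ℂ) * a ^ (n - 1) / (a ^ n - 1)) := by
          rw [Fin.sum_univ_eq_sum_range (fun i => (a - ζ ^ i)⁻¹) n,
            sum_inv_sub_zeta n hn1 ζ hζprim a haU]
      _ = (n : ℂ) * ((σ d / σ e) ^ n) / ((σ d / σ e) ^ n - 1) * (σ d * ζ ^ (k : ℕ))⁻¹ := by
          rw [← han]
          have hX : σ d * ζ ^ (k : ℕ) = a * σ e := by
            rw [hadef, div_mul_cancel₀ _ (hσ0 e)]
          have hmid : (n : ℂ) * a ^ (n - 1) / (a ^ n - 1)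
              = (n : ℂ) * a ^ n / (a ^ n - 1) * a⁻¹ := by
            rw [← hpow]
            field_simp
          rw [hX, mul_inv, hmid]
          ring
    -- velocity formula
  have hvsum : ∀ (k : Fin n) (d : Fin 2), v (k, d) = Complex.I *
      ∑ e : Fin 2, (Γ e : ℂ) * ∑ j : Fin n, (σ d * ζ ^ (k : ℕ) - σ e * ζ ^ (j : ℕ))⁻¹ := by
    intro k d
    rw [hv (k, d)]
    congr 1
    rw [Finset.sum_sdiff_eq_sub (Finset.subset_univ {(k, d)}), Finset.sum_singleton,
      sub_self, div_zero, sub_zero, Fintype.sum_prod_type_right]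
    refine Finset.sum_congr rfl fun e _ => ?_
    rw [Finset.mul_sum]
    refine Finset.sum_congr rfl fun j _ => ?_
    rw [hzconj (k, d), hzconj (j, e), div_eq_mul_inv]
  have hW0inv : ((σ 0 / σ 1) ^ n) = U⁻¹ := by
    rw [hUdef, ← inv_pow, inv_div]
  have hUinv1 : (σ 0 / σ 1) ^ n ≠ 1 := by
    rw [hW0inv]; intro h; exact hU1 (by rwa [inv_eq_one] at h)
  obtain ⟨P, hPdef⟩ : ∃ P : ℂ, P = (Γ 0 : ℂ) * (((n:ℂ) - 1) / 2)
      + (Γ 1 : ℂ) * ((n:ℂ) * U⁻¹ / (U⁻¹ - 1)) := ⟨_, rfl⟩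
  obtain ⟨Q, hQdef⟩ : ∃ Q : ℂ, Q = (Γ 1 : ℂ) * (((n:ℂ) - 1) / 2)
      + (Γ 0 : ℂ) * ((n:ℂ) * U / (U - 1)) := ⟨_, rfl⟩
  have hv0 : ∀ k : Fin n, v (k, 0) = Complex.I * ((σ 0 * ζ ^ (k:ℕ))⁻¹ * P) := by
    intro k
    rw [hvsum k 0, Fin.sum_univ_two, sumA k 0, sumB k 0 1 hUinv1, hW0inv, hPdef]
    ring
  have hv1 : ∀ k : Fin n, v (k, 1) = Complex.I * ((σ 1 * ζ ^ (k:ℕ))⁻¹ * Q) := by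
    intro k
    rw [hvsum k 1, Fin.sum_univ_two, sumA k 1, sumB k 1 0 hU1, ← hUdef, hQdef]
    ring
  have hIX : ∀ (d : Fin 2) (k : Fin n), Complex.I * (σ d * ζ ^ (k:ℕ))⁻¹ ≠ 0 :=
    fun d k => mul_ne_zero Complex.I_ne_zero (inv_ne_zero (hXne d k))
  have hk0 : (0 : Fin n) = ⟨0, by omega⟩ := rfl
  have hiff : (∀ q, v q = 0) ↔ (P = 0 ∧ Q = 0) := by
    constructor
    · intro h
      constructor
      · have h0 := h ((0 : Fin n), 0)
        rw [hv0, ← mul_assoc] at h0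
        exact (mul_eq_zero.mp h0).resolve_left (hIX 0 _)
      · have h1 := h ((0 : Fin n), 1)
        rw [hv1, ← mul_assoc] at h1
        exact (mul_eq_zero.mp h1).resolve_left (hIX 1 _)
    · rintro ⟨hP, hQ⟩ ⟨k, d⟩
      fin_cases d
      · show v (k, 0) = 0
        rw [hv0, hP, mul_zero, mul_zero]
      · show v (k, 1) = 0
        rw [hv1, hQ, mul_zero, mul_zero]
  -- numeric facts
  have hnR1 : (0:ℝ) < (n:ℝ) - 1 := by
    have h2 : (2:ℝ) ≤ (n:ℝ) := by exact_mod_cast hn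
    linarith
  have hNne1 : (n:ℂ) ≠ 1 := by exact_mod_cast (show n ≠ 1 by omega)
  have hN1 : ((n:ℂ) - 1) ≠ 0 := sub_ne_zero.mpr hNne1
  have hNn : (n:ℂ) ≠ 0 := Nat.cast_ne_zero.mpr hn0
  have hΓ0c : (Γ 0 : ℂ) ≠ 0 := Complex.ofReal_ne_zero.mpr (hΓ 0)
  have hΓ1c : (Γ 1 : ℂ) ≠ 0 := Complex.ofReal_ne_zero.mpr (hΓ 1)
  have hrc : (r:ℂ) * (Γ 0:ℂ) = (Γ 1:ℂ) := by
    have h : r * Γ 0 = Γ 1 := by rw [hr]; exact div_mul_cancel₀ _ (hΓ 0)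
    exact_mod_cast h
  have hlamc : (lam:ℂ) * ((n:ℂ) - 1) = 2 * (n:ℂ) := by
    have h : lam * ((n:ℝ) - 1) = 2 * (n:ℝ) := by
      rw [hlam]; exact div_mul_cancel₀ _ (ne_of_gt hnR1)
    exact_mod_cast h
  have h1U : 1 - U ≠ 0 := sub_ne_zero.mpr (Ne.symm hU1)
  have hU1s : U - 1 ≠ 0 := sub_ne_zero.mpr hU1
  have hUinv0 : U⁻¹ - 1 ≠ 0 := by
    rw [sub_ne_zero]; intro h; exact hU1 (by rw [← inv_inv U, h, inv_one])
  have hPiff : P = 0 ↔ (Γ 0:ℂ) * ((n:ℂ)-1) * (1 - U) + 2 * (Γ 1:ℂ) * (n:ℂ) = 0 := by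
    have key : P * (2 * (1 - U)) = (Γ 0:ℂ) * ((n:ℂ)-1) * (1 - U) + 2 * (Γ 1:ℂ) * (n:ℂ) := by
      rw [hPdef]
      field_simp
    constructor
    · intro h; rw [h, zero_mul] at key; linear_combination -key
    · intro h
      rcases mul_eq_zero.mp (key.trans h) with h' | h'
      · exact h'
      · exact absurd h' (mul_ne_zero two_ne_zero h1U)
  have hQiff : Q = 0 ↔ (Γ 1:ℂ) * ((n:ℂ)-1) * (U - 1) + 2 * (Γ 0:ℂ) * (n:ℂ) * U = 0 := by
    have key : Q * (2 * (U - 1)) = (Γ 1:ℂ) * ((n:ℂ)-1) * (U - 1) + 2 * (Γ 0:ℂ) * (n:ℂ) * U := by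
      rw [hQdef]
      field_simp
    constructor
    · intro h; rw [h, zero_mul] at key; linear_combination -key
    · intro h
      rcases mul_eq_zero.mp (key.trans h) with h' | h'
      · exact h'
      · exact absurd h' (mul_ne_zero two_ne_zero hU1s)
  have halg : ((Γ 0:ℂ) * ((n:ℂ)-1) * (1 - U) + 2 * (Γ 1:ℂ) * (n:ℂ) = 0 ∧
               (Γ 1:ℂ) * ((n:ℂ)-1) * (U - 1) + 2 * (Γ 0:ℂ) * (n:ℂ) * U = 0)
      ↔ (U = 1 + (lam:ℂ)*(r:ℂ) ∧ U = -((r:ℂ)^2)) := by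
    constructor
    · rintro ⟨h1, h2⟩
      have e1 : U = 1 + (lam:ℂ)*(r:ℂ) := by
        apply mul_right_cancel₀ (mul_ne_zero hΓ0c hN1)
        linear_combination -h1 - (r:ℂ)*(Γ 0:ℂ)*hlamc - 2*(n:ℂ)*hrc
      refine ⟨e1, ?_⟩
      apply mul_right_cancel₀ (mul_ne_zero (mul_ne_zero two_ne_zero hNn) hΓ0c)
      linear_combination h2 - (Γ 1:ℂ)*((n:ℂ)-1)*e1 - (Γ 1:ℂ)*(r:ℂ)*hlamc + 2*(n:ℂ)*(r:ℂ)*hrc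
    · rintro ⟨e1, e2⟩
      constructor
      · linear_combination (-(Γ 0:ℂ))*((n:ℂ)-1)*e1 - (r:ℂ)*(Γ 0:ℂ)*hlamc - 2*(n:ℂ)*hrc
      · linear_combination (Γ 1:ℂ)*((n:ℂ)-1)*e1 + 2*(Γ 0:ℂ)*(n:ℂ)*e2
          + (Γ 1:ℂ)*(r:ℂ)*hlamc - 2*(n:ℂ)*(r:ℂ)*hrc
  have hc1 : C (1 + (lam:ℂ) * (r:ℂ)) = 1 + (lam:ℂ)*(r:ℂ) := by
    rw [hC]; simp [Complex.conj_ofReal]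
  have hc2 : C (-((r:ℂ)^2)) = -((r:ℂ)^2) := by
    rw [hC]; simp [Complex.conj_ofReal]
  have conv : ∀ c : ℂ, C c = c → (((s 1 / s 0) ^ n = c) ↔ U = c) := by
    intro c hcc
    rw [hUconj]
    constructor
    · intro h; rw [h, hcc]
    · intro h
      have h2 := congrArg C h
      rw [hC] at h2
      rwa [Complex.conj_conj, ← hC, hcc] at h2
  have main : (∀ q, v q = 0) ↔ (U = 1 + (lam:ℂ)*(r:ℂ) ∧ U = -((r:ℂ)^2)) := by
    rw [hiff, hPiff, hQiff]
    exact halg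
  constructor
  · exact main.trans (and_congr (conv _ hc1).symm (conv _ hc2).symm)
  · intro heq
    obtain ⟨hw1, hw2⟩ := main.mp heq
    have hquadC : ((r^2 + lam*r + 1 : ℝ) : ℂ) = 0 := by
      push_cast
      linear_combination hw2 - hw1
    have hquad : r^2 + lam*r + 1 = 0 := by exact_mod_cast hquadC
    set ν : ℝ := (n:ℝ)/((n:ℝ)-1) with hν
    have hν1 : 1 < ν := by
      rw [hν, one_lt_div hnR1]
      linarith
    have hD : 0 < ν^2 - 1 := by nlinarith
    have hsq : Real.sqrt (ν^2-1) ^ 2 = ν^2 - 1 := Real.sq_sqrt hD.le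
    have hsqnn : 0 ≤ Real.sqrt (ν^2-1) := Real.sqrt_nonneg _
    have hlamν : lam = 2*ν := by rw [hlam, hν]; ring
    have hμν : μ = ν + Real.sqrt (ν^2 - 1) := hμ
    have hμpos : 0 < μ := by rw [hμν]; linarith
    have hlampos : 0 < lam := by rw [hlamν]; linarith
    have hrneg : r < 0 := by
      by_contra h
      push_neg at h
      nlinarith [sq_nonneg r, mul_nonneg hlampos.le h]
    have h2ν : r^2 + 2*ν*r + 1 = 0 := by rw [hlamν] at hquad; linarith
    have hfac : (r + ν - Real.sqrt (ν^2-1)) * (r + ν + Real.sqrt (ν^2-1)) = 0 := by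
      linear_combination h2ν - hsq
    have hcase : r = -μ ∨ r = -1/μ := by
      rcases mul_eq_zero.mp hfac with h | h
      · right
        rw [eq_div_iff (ne_of_gt hμpos)]
        linear_combination μ*h + (Real.sqrt (ν^2-1) - ν)*hμν + hsq
      · left
        linear_combination h + hμν
    have hr2pos : (0:ℝ) < r^2 := by nlinarith
    refine ⟨hcase, hrneg, ⟨-(r^2), by linarith, ?_⟩⟩
    have hfin := (conv _ hc2).mpr hw2
    rw [hfin]
    push_cast
    ring
end

section
/- Consider a two-polygon configuration with n ≥ 2 that is a relative equilibrium rotating about 0 with angular velocity ω ∈ ℝ (i.e., v_{k,d} = i·ω·z_{k,d} for all vortices). Assume either that Γ₁ and Γ₂ have the same sign and (s₂/s₁)ⁿ = |s₂/s₁|ⁿ (argument of s₂/s₁ equal to 2Kπ/n), or that Γ₁ and Γ₂ have opposite signs and (s₂/s₁)ⁿ = −|s₂/s₁|ⁿ (argument 2(K+1/2)π/n). Let z ∈ ℂ with z ≠ 0, zⁿ ≠ s₁ⁿ and zⁿ ≠ s₂ⁿ. If the point z co-rotates with the configuration, i.e., i·n·Γ₁·conj(z)^{n−1}/(conj(z)ⁿ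 − conj(s₁)ⁿ) + i·n·Γ₂·conj(z)^{n−1}/(conj(z)ⁿ − conj(s₂)ⁿ) = i·ω·z, then (s₁/z)ⁿ ∈ ℝ; equivalently, the argument of z/s₁ is an integer multiple of π/n. -/
open Finset

/-- **Co-rotating points of two concentric regular `n`-gons lie on rays of
argument `K'π/n`.** For a relative equilibrium of two concentric regular `n`-gons
rotating about `0` with angular velocity `ω`, where either `Γ₁, Γ₂` have the same
sign and the argument of `s₂/s₁` is `2Kπ/n`, or `Γ₁, Γ₂` have opposite signs and
the argument is `2(K+1/2)π/n`: if a point `z ≠ 0` with `zⁿ ∉ {s₁ⁿ, s₂ⁿ}`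
co-rotates with the configuration, then `(s₁/z)ⁿ` is real. -/
theorem two_polygon_corotating_points
    (n : ℕ) (hn : 2 ≤ n)
    (ρ : ℂ) (hρ : ρ = Complex.exp (2 * Real.pi * Complex.I / n))
    (s : Fin 2 → ℂ) (hs : ∀ d, s d ≠ 0)
    (hsep : (s 1 / s 0) ^ n ≠ 1)
    (Γ : Fin 2 → ℝ) (hΓ : ∀ d, Γ d ≠ 0)
    (z : Fin n × Fin 2 → ℂ) (hz : ∀ q, z q = s q.2 * ρ ^ (q.1 : ℕ))
    (v : Fin n × Fin 2 → ℂ)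
    (hv : ∀ q, v q = Complex.I *
      ∑ q' ∈ univ \ {q}, (Γ q'.2 : ℂ) / (starRingEnd ℂ (z q) - starRingEnd ℂ (z q')))
    (ω : ℝ)
    (hre : ∀ q, v q = Complex.I * (ω : ℂ) * z q)
    (hsign : (0 < Γ 0 * Γ 1 ∧ (s 1 / s 0) ^ n = ((‖s 1 / s 0‖ : ℝ) : ℂ) ^ n)
      ∨ (Γ 0 * Γ 1 < 0 ∧ (s 1 / s 0) ^ n = -((‖s 1 / s 0‖ : ℝ) : ℂ) ^ n))
    (w : ℂ) (hw0 : w ≠ 0) (hw1 : w ^ n ≠ (s 0) ^ n) (hw2 : w ^ n ≠ (s 1) ^ n)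
    (hco : Complex.I * n * (Γ 0 : ℂ) * (starRingEnd ℂ w) ^ (n - 1) /
          ((starRingEnd ℂ w) ^ n - (starRingEnd ℂ (s 0)) ^ n)
        + Complex.I * n * (Γ 1 : ℂ) * (starRingEnd ℂ w) ^ (n - 1) /
          ((starRingEnd ℂ w) ^ n - (starRingEnd ℂ (s 1)) ^ n)
      = Complex.I * (ω : ℂ) * w) :
    ((s 0 / w) ^ n).im = 0 := by

  clear hρ hz hv hre hsep
  obtain ⟨m, rfl⟩ : ∃ m, n = m + 1 := ⟨n - 1, by omega⟩
  have hm1 : ((m : ℂ) + 1) ≠ 0 := by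
    have : ((m + 1 : ℕ) : ℂ) ≠ 0 := Nat.cast_ne_zero.mpr (by omega)
    push_cast at this; exact this
  set a := (s 0) ^ (m + 1) with ha_def
  set b := (s 1) ^ (m + 1) with hb_def
  set u := w ^ (m + 1) with hu_def
  have ha : a ≠ 0 := pow_ne_zero _ (hs 0)
  have hu : u ≠ 0 := pow_ne_zero _ hw0
  have hcu : starRingEnd ℂ u ≠ 0 := by simpa using hu
  -- extract the real ratio t = b / a with sign matching Γ 0 * Γ 1
  obtain ⟨t, htb, hts⟩ : ∃ t : ℝ, b = (t : ℂ) * a ∧ 0 < Γ 0 * (Γ 1 * t) := by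
    have hba : b = (s 1 / s 0) ^ (m + 1) * a := by
      rw [div_pow]; exact (div_mul_cancel₀ (s 1 ^ (m + 1)) ha).symm
    have habs : (0:ℝ) < ‖s 1 / s 0‖ ^ (m + 1) :=
      pow_pos (norm_pos_iff.mpr (div_ne_zero (hs 1) (hs 0))) _
    rcases hsign with ⟨hpos, heq⟩ | ⟨hneg, heq⟩
    · refine ⟨‖s 1 / s 0‖ ^ (m + 1), ?_, ?_⟩
      · rw [hba, heq]; push_cast; ring
      · nlinarith
    · refine ⟨-(‖s 1 / s 0‖ ^ (m + 1)), ?_, ?_⟩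
      · rw [hba, heq]; push_cast; ring
      · nlinarith
  -- conjugate abbreviations
  have hcwu : (starRingEnd ℂ w) ^ (m + 1) = starRingEnd ℂ u := (map_pow _ _ _).symm
  have hcs0 : (starRingEnd ℂ (s 0)) ^ (m + 1) = starRingEnd ℂ a := (map_pow _ _ _).symm
  have hcs1 : (starRingEnd ℂ (s 1)) ^ (m + 1) = starRingEnd ℂ b := (map_pow _ _ _).symm
  have hd1 : starRingEnd ℂ u - starRingEnd ℂ a ≠ 0 := by
    rw [sub_ne_zero]
    intro h
    exact hw1 ((starRingEnd ℂ).injective h)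
  have hd2 : starRingEnd ℂ u - starRingEnd ℂ b ≠ 0 := by
    rw [sub_ne_zero]
    intro h
    exact hw2 ((starRingEnd ℂ).injective h)
  -- multiply the co-rotation equation by conj w
  have hmc : w * starRingEnd ℂ w = (Complex.normSq w : ℂ) := Complex.mul_conj w
  have key : Complex.I * ((m:ℂ)+1) * (Γ 0 : ℂ) * (starRingEnd ℂ w) ^ (m+1) /
        (starRingEnd ℂ u - starRingEnd ℂ a)
      + Complex.I * ((m:ℂ)+1) * (Γ 1 : ℂ) * (starRingEnd ℂ w) ^ (m+1) /
        (starRingEnd ℂ u - starRingEnd ℂ b)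
      = Complex.I * (ω : ℂ) * (Complex.normSq w : ℂ) := by
    have hco' := hco
    simp only [Nat.add_sub_cancel] at hco'
    rw [hcwu, hcs0, hcs1] at hco'
    push_cast at hco'
    linear_combination (starRingEnd ℂ w) * hco' + Complex.I * (ω:ℂ) * hmc
  rw [hcwu] at key
  -- rewrite in terms of y = a / u
  set y := a / u with hy_def
  have hyc : starRingEnd ℂ y = starRingEnd ℂ a / starRingEnd ℂ u := map_div₀ _ _ _
  have hcb : starRingEnd ℂ b = (t:ℂ) * starRingEnd ℂ a := by
    rw [htb, map_mul, Complex.conj_ofReal]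
  have hc1 : (1:ℂ) - starRingEnd ℂ y = (starRingEnd ℂ u - starRingEnd ℂ a) / starRingEnd ℂ u := by
    rw [hyc]; field_simp
  have hc2 : (1:ℂ) - (t:ℂ) * starRingEnd ℂ y
      = (starRingEnd ℂ u - starRingEnd ℂ b) / starRingEnd ℂ u := by
    rw [hyc, hcb]; field_simp
  have hc1' : (1:ℂ) - starRingEnd ℂ y ≠ 0 := by
    rw [hc1]; exact div_ne_zero hd1 hcu
  have hc2' : (1:ℂ) - (t:ℂ) * starRingEnd ℂ y ≠ 0 := by
    rw [hc2]; exact div_ne_zero hd2 hcu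
  have key2 : Complex.I * ((m:ℂ)+1) * (Γ 0 : ℂ) / ((1:ℂ) - starRingEnd ℂ y)
      + Complex.I * ((m:ℂ)+1) * (Γ 1 : ℂ) / ((1:ℂ) - (t:ℂ) * starRingEnd ℂ y)
      = Complex.I * (ω : ℂ) * (Complex.normSq w : ℂ) := by
    rw [hc1, hc2, div_div_eq_mul_div, div_div_eq_mul_div]
    exact key
  have hE : (Γ 0 : ℂ) / ((1:ℂ) - starRingEnd ℂ y)
      + (Γ 1 : ℂ) / ((1:ℂ) - (t:ℂ) * starRingEnd ℂ y)
      = ((ω * Complex.normSq w / ((m:ℝ)+1) : ℝ) : ℂ) := by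
    apply mul_left_cancel₀ (mul_ne_zero Complex.I_ne_zero hm1)
    have hdc : ((m:ℂ)+1) * ((ω:ℂ) * (Complex.normSq w : ℂ) / ((m:ℂ)+1))
        = (ω:ℂ) * (Complex.normSq w : ℂ) := mul_div_cancel₀ _ hm1
    push_cast
    linear_combination key2 - Complex.I * hdc
  -- take imaginary parts
  set N1 := Complex.normSq ((1:ℂ) - starRingEnd ℂ y) with hN1_def
  set N2 := Complex.normSq ((1:ℂ) - (t:ℂ) * starRingEnd ℂ y) with hN2_def
  have hN1 : 0 < N1 := Complex.normSq_pos.mpr hc1'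
  have hN2 : 0 < N2 := Complex.normSq_pos.mpr hc2'
  have him : Γ 0 * y.im / N1 + Γ 1 * t * y.im / N2 = 0 := by
    have h := congrArg Complex.im hE
    rw [Complex.add_im, Complex.ofReal_im, Complex.div_im, Complex.div_im] at h
    simp only [Complex.ofReal_im, Complex.ofReal_re, Complex.sub_im, Complex.sub_re,
      Complex.one_im, Complex.one_re, Complex.mul_im, Complex.mul_re,
      Complex.conj_im, Complex.conj_re, zero_mul, mul_zero, zero_sub, sub_zero,
      zero_div, neg_neg, neg_zero, zero_add, add_zero] at h
    rw [← hN1_def, ← hN2_def] at h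
    linear_combination -h
  have hfac : y.im * (Γ 0 / N1 + Γ 1 * t / N2) = 0 := by linear_combination him
  have hy0 : y.im = 0 := by
    rcases mul_eq_zero.mp hfac with h | h
    · exact h
    · exfalso
      rcases (hΓ 0).lt_or_gt with h0 | h0
      · have h1 : Γ 1 * t < 0 := by nlinarith
        have : Γ 0 / N1 + Γ 1 * t / N2 < 0 :=
          add_neg (div_neg_of_neg_of_pos h0 hN1) (div_neg_of_neg_of_pos h1 hN2)
        exact absurd h (ne_of_lt this)
      · have h1 : 0 < Γ 1 * t := by nlinarith
        have : 0 < Γ 0 / N1 + Γ 1 * t / N2 :=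
          add_pos (div_pos h0 hN1) (div_pos h1 hN2)
        exact absurd h (ne_of_gt this)
  rw [div_pow]
  exact hy0
end

section
/- Consider a two-polygon configuration with n ≥ 2 which is an absolute equilibrium, i.e., (s₂/s₁)ⁿ = 1 + (2n/(n−1))·(Γ₂/Γ₁) = −(Γ₂/Γ₁)², and assume |Γ₂| > |Γ₁| (so the first polygon is the internal one). Let z ∈ ℂ with z ≠ 0, zⁿ ≠ s₁ⁿ and zⁿ ≠ s₂ⁿ. Then the velocity generated by the configuration at z vanishes if and only if (z/s₁)ⁿ = (Γ₂/Γ₁)·(1 − Γ₂/Γ₁)/(1 + Γ₂/Γ₁), and this number is a positive real. In particular, there is exactly one real x > 0 such that the point z = s₁·x (on the ray from 0 through the vertex s₁ of the internal polygon) has zero velocity. -/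
/-- The velocity generated at the point `z` (with `zⁿ ∉ {s₁ⁿ, s₂ⁿ}`) by two
concentric regular `n`-gons of vortices at `s_d ρᵏ` with vorticities `Γ_d`:
`i n Γ₁ conj(z)^{n−1}/(conj(z)ⁿ − conj(s₁)ⁿ) + i n Γ₂ conj(z)^{n−1}/(conj(z)ⁿ − conj(s₂)ⁿ)`. -/
noncomputable def twoGonVel (n : ℕ) (s₁ s₂ : ℂ) (Γ₁ Γ₂ : ℝ) (z : ℂ) : ℂ :=
  Complex.I * n * (Γ₁ : ℂ) * (starRingEnd ℂ z) ^ (n - 1) /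
      ((starRingEnd ℂ z) ^ n - (starRingEnd ℂ s₁) ^ n)
    + Complex.I * n * (Γ₂ : ℂ) * (starRingEnd ℂ z) ^ (n - 1) /
      ((starRingEnd ℂ z) ^ n - (starRingEnd ℂ s₂) ^ n)

/-- **Stationary points of a two-polygon absolute equilibrium.**
For a two-polygon absolute equilibrium (`(s₂/s₁)ⁿ = 1 + (2n/(n−1))r = −r²`,
`r = Γ₂/Γ₁`) with `|Γ₂| > |Γ₁|` (so the first polygon is internal), a point `z ≠ 0`
off the singularities has zero velocity iff `(z/s₁)ⁿ = r(1 − r)/(1 + r)`, and this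
number is a positive real. In particular there is exactly one `x > 0` such that
the point `z = s₁ x`, on the ray from `0` through the vertex `s₁` of the internal
polygon, has zero velocity. -/
theorem two_polygon_absolute_equilibrium_corotating
    (n : ℕ) (hn : 2 ≤ n)
    (ρ : ℂ) (hρ : ρ = Complex.exp (2 * Real.pi * Complex.I / n))
    (s₁ s₂ : ℂ) (hs₁ : s₁ ≠ 0) (hs₂ : s₂ ≠ 0)
    (hsep : (s₂ / s₁) ^ n ≠ 1)
    (Γ₁ Γ₂ : ℝ) (hΓ₁ : Γ₁ ≠ 0) (hΓ₂ : Γ₂ ≠ 0)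
    (r : ℝ) (hr : r = Γ₂ / Γ₁)
    (habs₁ : (s₂ / s₁) ^ n = 1 + (2 * n / ((n : ℝ) - 1) * r : ℝ))
    (habs₂ : (s₂ / s₁) ^ n = -((r : ℂ) ^ 2))
    (hΓ : |Γ₁| < |Γ₂|) :
    (∀ z : ℂ, z ≠ 0 → z ^ n ≠ s₁ ^ n → z ^ n ≠ s₂ ^ n →
      (twoGonVel n s₁ s₂ Γ₁ Γ₂ z = 0 ↔ (z / s₁) ^ n = ((r * (1 - r) / (1 + r) : ℝ) : ℂ)))
    ∧ 0 < r * (1 - r) / (1 + r)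
    ∧ (∃! x : ℝ, 0 < x ∧ (s₁ * x) ^ n ≠ s₁ ^ n ∧ (s₁ * x) ^ n ≠ s₂ ^ n ∧
        twoGonVel n s₁ s₂ Γ₁ Γ₂ (s₁ * x) = 0) := by
  have hnR : (1:ℝ) ≤ (n:ℝ) - 1 := by
    have : (2:ℝ) ≤ n := by exact_mod_cast hn
    linarith
  have hnne : n ≠ 0 := by omega
  have hnC : (n:ℂ) ≠ 0 := Nat.cast_ne_zero.mpr hnne
  -- the real quadratic relation
  have hquad : 1 + 2 * (n:ℝ) / ((n : ℝ) - 1) * r = -r ^ 2 := by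
    have h := habs₁.symm.trans habs₂
    have h2 : ((1 + 2 * (n:ℝ) / ((n : ℝ) - 1) * r : ℝ) : ℂ) = ((-r ^ 2 : ℝ) : ℂ) := by
      push_cast at h ⊢; linear_combination h
    exact_mod_cast h2
  -- r < -1
  have habsr : 1 < |r| := by
    rw [hr, abs_div]
    exact (one_lt_div (abs_pos.mpr hΓ₁)).mpr hΓ
  have hrneg : r < 0 := by
    by_contra h
    push_neg at h
    have h2 : 0 < 2 * (n:ℝ) / ((n : ℝ) - 1) := by positivity
    nlinarith [mul_nonneg h2.le h, sq_nonneg r]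
  have hr1 : r < -1 := by
    rcases abs_cases r with ⟨h1, _⟩ | ⟨h1, _⟩ <;> linarith
  have h1r : (1:ℝ) + r ≠ 0 := by linarith
  have h1rC : (1:ℂ) + (r:ℂ) ≠ 0 := by
    intro h
    apply h1r
    exact_mod_cast (by push_cast at h ⊢; exact h : ((1 + r : ℝ):ℂ) = 0)
  have hΓ1C : (Γ₁:ℂ) ≠ 0 := Complex.ofReal_ne_zero.mpr hΓ₁
  have hc : 0 < r * (1 - r) / (1 + r) :=
    div_pos_of_neg_of_neg (mul_neg_of_neg_of_pos hrneg (by linarith)) (by linarith)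
  have hs2n : s₂ ^ n = -(r:ℂ) ^ 2 * s₁ ^ n := by
    have h := habs₂
    rw [div_pow, div_eq_iff (pow_ne_zero n hs₁)] at h
    linear_combination h
  have hΓ2C : (Γ₂:ℂ) = (r:ℂ) * Γ₁ := by
    have : Γ₂ = r * Γ₁ := by rw [hr]; field_simp
    exact_mod_cast congrArg (Complex.ofReal) this
  have hcast : ((r * (1 - r) / (1 + r) : ℝ) : ℂ) = ((r:ℂ) - (r:ℂ)^2) / (1 + (r:ℂ)) := by
    push_cast; ring
  -- main equivalence
  have main : ∀ z : ℂ, z ≠ 0 → z ^ n ≠ s₁ ^ n → z ^ n ≠ s₂ ^ n →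
      (twoGonVel n s₁ s₂ Γ₁ Γ₂ z = 0 ↔ (z / s₁) ^ n = ((r * (1 - r) / (1 + r) : ℝ) : ℂ)) := by
    intro z hz h1 h2
    have hw : starRingEnd ℂ z ≠ 0 := by simpa using hz
    have hD₁ : (starRingEnd ℂ z) ^ n - (starRingEnd ℂ s₁) ^ n ≠ 0 := by
      rw [← map_pow, ← map_pow, ← map_sub]
      exact (map_ne_zero_iff _ (starRingEnd ℂ).injective).mpr (sub_ne_zero.mpr h1)
    have hD₂ : (starRingEnd ℂ z) ^ n - (starRingEnd ℂ s₂) ^ n ≠ 0 := by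
      rw [← map_pow, ← map_pow, ← map_sub]
      exact (map_ne_zero_iff _ (starRingEnd ℂ).injective).mpr (sub_ne_zero.mpr h2)
    have hW : (starRingEnd ℂ z) ^ (n - 1) ≠ 0 := pow_ne_zero _ hw
    rw [twoGonVel, div_add_div _ _ hD₁ hD₂, div_eq_zero_iff,
      or_iff_left (mul_ne_zero hD₁ hD₂)]
    -- reduce to the linear relation
    have hfac :
        Complex.I * n * (Γ₁:ℂ) * (starRingEnd ℂ z) ^ (n - 1) *
            ((starRingEnd ℂ z) ^ n - (starRingEnd ℂ s₂) ^ n)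
          + ((starRingEnd ℂ z) ^ n - (starRingEnd ℂ s₁) ^ n) *
            (Complex.I * n * (Γ₂:ℂ) * (starRingEnd ℂ z) ^ (n - 1))
        = (Complex.I * n * (starRingEnd ℂ z) ^ (n - 1)) *
            ((Γ₁:ℂ) * ((starRingEnd ℂ z) ^ n - (starRingEnd ℂ s₂) ^ n)
              + (Γ₂:ℂ) * ((starRingEnd ℂ z) ^ n - (starRingEnd ℂ s₁) ^ n)) := by ring
    rw [hfac, mul_eq_zero,
      or_iff_right (mul_ne_zero (mul_ne_zero Complex.I_ne_zero hnC) hW)]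
    -- conjugate bookkeeping
    have hconj :
        (Γ₁:ℂ) * ((starRingEnd ℂ z) ^ n - (starRingEnd ℂ s₂) ^ n)
          + (Γ₂:ℂ) * ((starRingEnd ℂ z) ^ n - (starRingEnd ℂ s₁) ^ n)
        = starRingEnd ℂ ((Γ₁:ℂ) * (z ^ n - s₂ ^ n) + (Γ₂:ℂ) * (z ^ n - s₁ ^ n)) := by
      simp [map_add, map_mul, map_sub, map_pow, Complex.conj_ofReal]
    rw [hconj, map_eq_zero]
    have hE : (Γ₁:ℂ) * (z ^ n - s₂ ^ n) + (Γ₂:ℂ) * (z ^ n - s₁ ^ n)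
        = (Γ₁:ℂ) * ((1 + (r:ℂ)) * z ^ n - ((r:ℂ) - (r:ℂ)^2) * s₁ ^ n) := by
      rw [hs2n, hΓ2C]; ring
    rw [hE, mul_eq_zero, or_iff_right hΓ1C, sub_eq_zero, hcast, div_pow,
      div_eq_iff (pow_ne_zero n hs₁), div_mul_eq_mul_div, eq_div_iff h1rC]
    constructor <;> intro h <;> linear_combination h
  refine ⟨main, hc, ?_⟩
  -- the unique stationary point on the ray
  set x : ℝ := (r * (1 - r) / (1 + r)) ^ ((n:ℝ)⁻¹) with hxdef
  have hx : 0 < x := Real.rpow_pos_of_pos hc _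
  have hnRne : (n:ℝ) ≠ 0 := Nat.cast_ne_zero.mpr hnne
  have hxn : x ^ n = r * (1 - r) / (1 + r) := by
    rw [hxdef, ← Real.rpow_natCast ((r * (1 - r) / (1 + r)) ^ ((n:ℝ)⁻¹)) n,
      ← Real.rpow_mul hc.le, inv_mul_cancel₀ hnRne, Real.rpow_one]
  have hcne1 : r * (1 - r) / (1 + r) ≠ 1 := by
    intro h
    rw [div_eq_one_iff_eq h1r] at h
    nlinarith [sq_nonneg r]
  have hzform : ∀ y : ℝ, (s₁ * (y:ℂ)) ^ n = ((y:ℝ)^n : ℝ) * s₁ ^ n := by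
    intro y; push_cast; ring
  have hxC : (s₁ * (x:ℂ)) ^ n = ((r * (1 - r) / (1 + r) : ℝ) : ℂ) * s₁ ^ n := by
    rw [hzform x, hxn]
  have hxne0 : s₁ * (x:ℂ) ≠ 0 :=
    mul_ne_zero hs₁ (Complex.ofReal_ne_zero.mpr hx.ne')
  have hx1 : (s₁ * (x:ℂ)) ^ n ≠ s₁ ^ n := by
    rw [hxC]
    intro h
    apply hcne1
    have := mul_right_cancel₀ (pow_ne_zero n hs₁) (h.trans (one_mul (s₁ ^ n)).symm)
    exact_mod_cast this
  have hx2 : (s₁ * (x:ℂ)) ^ n ≠ s₂ ^ n := by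
    rw [hxC, hs2n]
    intro h
    have h2 : ((r * (1 - r) / (1 + r) : ℝ) : ℂ) = ((-(r^2) : ℝ) : ℂ) := by
      have := mul_right_cancel₀ (pow_ne_zero n hs₁) h
      push_cast at this ⊢
      linear_combination this
    have h3 : r * (1 - r) / (1 + r) = -(r^2) := by exact_mod_cast h2
    nlinarith [sq_nonneg r]
  have hdiv : ∀ y : ℝ, (s₁ * (y:ℂ)) / s₁ = (y:ℂ) := fun y => mul_div_cancel_left₀ _ hs₁
  refine ⟨x, ⟨hx, hx1, hx2, ?_⟩, ?_⟩
  · refine (main _ hxne0 hx1 hx2).mpr ?_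
    rw [hdiv x, ← Complex.ofReal_pow, hxn]
  · rintro y ⟨hy, hy1, hy2, hy0⟩
    have hyne0 : s₁ * (y:ℂ) ≠ 0 := mul_ne_zero hs₁ (Complex.ofReal_ne_zero.mpr hy.ne')
    have hyC := (main _ hyne0 hy1 hy2).mp hy0
    rw [hdiv y, ← Complex.ofReal_pow] at hyC
    have hyR : y ^ n = r * (1 - r) / (1 + r) := by exact_mod_cast hyC
    exact (pow_left_strictMonoOn₀ hnne).injOn hy.le hx.le (hyR.trans hxn.symm)
end
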